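/- arXiv:math/0510137 — 3 statements merged into one kernel-verified Lean document; each statement's English description precedes it below -/
import Mathlib

section
/- Let n1, n2, n3 ≥ 2 be integers with n1+n2+n3 ≥ 10, and let a1, a2, a3 be rationals with 0 ≤ a1 < 1, 0 ≤ a3 < 1 satisfying n1-2 = a1*n1 - a2, n2-2 = -a1 + a2*n2 - a3, n3-2 = -a2 + a3*n3. Then a1*(n1-2) + a2*(n2-2) + a3*(n3-2) > 2. -/
theorem stmt_1 (n1 n2 n3 : ℤ) (hn1 : 2 ≤ n1) (hn2 : 2 ≤ n2) (hn3 : 2 ≤ n3)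
    (hsum : 10 ≤ n1 + n2 + n3)
    (a1 a2 a3 : ℚ)
    (ha1 : 0 ≤ a1) (ha1' : a1 < 1) (ha3 : 0 ≤ a3) (ha3' : a3 < 1)
    (h1 : (n1 : ℚ) - 2 = a1 * n1 - a2)
    (h2 : (n2 : ℚ) - 2 = -a1 + a2 * n2 - a3)
    (h3 : (n3 : ℚ) - 2 = -a2 + a3 * n3) :
    2 < a1 * ((n1 : ℚ) - 2) + a2 * ((n2 : ℚ) - 2) + a3 * ((n3 : ℚ) - 2) := by
  have hs : (10:ℚ) ≤ (n1:ℚ) + n2 + n3 := by exact_mod_cast hsum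
  nlinarith [h1, h2, h3, hs, ha1', ha3']
end

section
/- Let n1, n2 ≥ 2 be integers with n1+n2 ≥ 8, and let a1, a2 be rationals with 0 ≤ a1 < 1, 0 ≤ a2 < 1 satisfying n1-2 = a1*n1 - a2 and n2-2 = -a1 + a2*n2. Then a1*(n1-2) + a2*(n2-2) > 2. -/
theorem stmt_3 (n1 n2 : ℤ) (hn1 : 2 ≤ n1) (hn2 : 2 ≤ n2) (hsum : 8 ≤ n1 + n2)
    (a1 a2 : ℚ)
    (ha1 : 0 ≤ a1) (ha1' : a1 < 1) (ha2 : 0 ≤ a2) (ha2' : a2 < 1)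
    (h1 : (n1 : ℚ) - 2 = a1 * n1 - a2)
    (h2 : (n2 : ℚ) - 2 = -a1 + a2 * n2) :
    2 < a1 * ((n1 : ℚ) - 2) + a2 * ((n2 : ℚ) - 2) := by
  have hx : (2:ℚ) ≤ (n1:ℚ) := by exact_mod_cast hn1
  have hy : (2:ℚ) ≤ (n2:ℚ) := by exact_mod_cast hn2
  have hs : (8:ℚ) ≤ (n1:ℚ) + (n2:ℚ) := by exact_mod_cast hsum
  nlinarith [mul_nonneg ha1 ha2, mul_nonneg (sub_nonneg.2 hx) (sub_nonneg.2 hy),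
    mul_pos (sub_pos.2 ha1') (sub_pos.2 ha2'),
    mul_nonneg ha1 (sub_nonneg.2 hx), mul_nonneg ha2 (sub_nonneg.2 hy),
    mul_nonneg ha1 (sub_nonneg.2 hy), mul_nonneg ha2 (sub_nonneg.2 hx)]
end

section
/- Suppose x1, ..., xr are rationals, each of the form 1/G_i + t_i/3 where the possible pairs (G_i, t_i) give values x_i ∈ {1/2, 2/9, 1/3, 1/15, 1/4} for the types (2), (3), (2,2), (2,3), (2,2,2) respectively, with all other types contributing x_i ≤ 0; and suppose the values 1/2 and 1/4 cannot both occur (corresponding groups of orders 2 and 4 not coprime), nor can 2/9 and 1/3 both occur (orders 3 and 3). Then if r ≥ 3 the maximal possible sum of the positive contributions is 1/2 + 1/3 + 1/15 = 9/10. -/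
lemma aux_18 (T : Finset ℚ) (hT : T ⊆ ({1/2, 2/9, 1/3, 1/15, 1/4} : Finset ℚ))
    (h1 : ¬((1:ℚ)/2 ∈ T ∧ (1:ℚ)/4 ∈ T)) (h2 : ¬((2:ℚ)/9 ∈ T ∧ (1:ℚ)/3 ∈ T)) :
    T.sum id ≤ 9/10 := by
  have hs : T.sum id = ∑ v ∈ ({1/2, 2/9, 1/3, 1/15, 1/4} : Finset ℚ),
      (if v ∈ T then v else 0) := by
    rw [Finset.sum_ite_mem, Finset.inter_eq_right.mpr hT]; simp
  rw [hs]
  by_cases a : (1:ℚ)/2 ∈ T <;> by_cases b : (2:ℚ)/9 ∈ T <;>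
    by_cases c : (1:ℚ)/3 ∈ T <;> by_cases d : (1:ℚ)/15 ∈ T <;>
    by_cases e : (1:ℚ)/4 ∈ T <;>
    first
      | exact absurd ⟨‹(1:ℚ)/2 ∈ T›, ‹(1:ℚ)/4 ∈ T›⟩ h1
      | exact absurd ⟨‹(2:ℚ)/9 ∈ T›, ‹(1:ℚ)/3 ∈ T›⟩ h2
      | norm_num [Finset.sum_insert, Finset.mem_insert, Finset.mem_singleton,
          a, b, c, d, e]


theorem stmt_18 (r : ℕ) (hr : 3 ≤ r) (x : Fin r → ℚ)
    (hval : ∀ i, x i ≤ 0 ∨ x i ∈ ({1/2, 2/9, 1/3, 1/15, 1/4} : Set ℚ))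
    (hinj : ∀ i j, i ≠ j → 0 < x i → 0 < x j → x i ≠ x j)
    (hex1 : ¬ ∃ i j, x i = 1/2 ∧ x j = 1/4)
    (hex2 : ¬ ∃ i j, x i = 2/9 ∧ x j = 1/3) :
    ∑ i ∈ Finset.univ.filter (fun i => 0 < x i), x i ≤ 9/10 := by
  set F := Finset.univ.filter (fun i => 0 < x i) with hF
  have hpos : ∀ i ∈ F, 0 < x i := by
    intro i hi; simpa [hF] using hi
  have hinj' : Set.InjOn x F := by
    intro i hi j hj hij
    by_contra hne
    exact hinj i j hne (hpos i hi) (hpos j hj) hij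
  have hsum : ∑ i ∈ F, x i = (F.image x).sum id := by
    rw [Finset.sum_image (fun i hi j hj h => hinj' hi hj h)]
    rfl
  rw [hsum]
  apply aux_18
  · intro v hv
    obtain ⟨i, hi, rfl⟩ := Finset.mem_image.mp hv
    rcases hval i with h | h
    · exact absurd (hpos i hi) (not_lt.mpr h)
    · simpa using h
  · rintro ⟨h1, h2⟩
    obtain ⟨i, _, hi⟩ := Finset.mem_image.mp h1
    obtain ⟨j, _, hj⟩ := Finset.mem_image.mp h2
    exact hex1 ⟨i, j, hi, hj⟩
  · rintro ⟨h1, h2⟩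
    obtain ⟨i, _, hi⟩ := Finset.mem_image.mp h1
    obtain ⟨j, _, hj⟩ := Finset.mem_image.mp h2
    exact hex2 ⟨i, j, hi, hj⟩
end
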